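/- For every integer m ≥ 0 and every integer ℓ ≥ 1, s_{m,ℓ} = ∑_{k=1}^{ℓ} S(ℓ,k) · k! · C(k-1, m), where S(ℓ,k) is the Stirling number of the second kind and C(k-1,m) is the binomial coefficient. -/

import Mathlib

/-- `IsBPA m ℓ f` : `f` encodes a barred preferential arrangement of `[ℓ]` with `m` bars.
Each element of `[ℓ]` is assigned a section (one of the `m + 1` sections determined by the
`m` bars) together with a rank inside its section (ties are allowed: elements of the same
section with the same rank form a block); within each section the set of ranks actually used
must be an initial segment `{0, …, t-1}`, so that `f` determines, for each section, an
ordered partition of the elements assigned to it into nonempty blocks. -/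
def IsBPA (m ℓ : ℕ) (f : Fin ℓ → Fin (m + 1) × Fin ℓ) : Prop :=
  ∀ x : Fin ℓ, ∀ r : Fin ℓ, r < (f x).2 → ∃ y : Fin ℓ, (f y).1 = (f x).1 ∧ (f y).2 = r

instance (m ℓ : ℕ) : DecidablePred (IsBPA m ℓ) := fun f => by unfold IsBPA; infer_instance

/-- `bpa m ℓ` : the number of barred preferential arrangements of `[ℓ]` with `m` bars.
In particular `bpa 0 ℓ` is the number of preferential arrangements of `[ℓ]`
(the Fubini / ordered Bell number `r_ℓ`). -/
def bpa (m ℓ : ℕ) : ℕ :=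
  Fintype.card { f : Fin ℓ → Fin (m + 1) × Fin ℓ // IsBPA m ℓ f }

/-- `IsSBPA m ℓ f` : `f` encodes a *special* barred preferential arrangement, i.e. a barred
preferential arrangement in which every section is nonempty. -/
def IsSBPA (m ℓ : ℕ) (f : Fin ℓ → Fin (m + 1) × Fin ℓ) : Prop :=
  IsBPA m ℓ f ∧ ∀ j : Fin (m + 1), ∃ x : Fin ℓ, (f x).1 = j

instance (m ℓ : ℕ) : DecidablePred (IsSBPA m ℓ) := fun f => by unfold IsSBPA; infer_instance

/-- `sbpa m ℓ` : the number of special barred preferential arrangements of `[ℓ]` with `m` bars. -/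
def sbpa (m ℓ : ℕ) : ℕ :=
  Fintype.card { f : Fin ℓ → Fin (m + 1) × Fin ℓ // IsSBPA m ℓ f }

/-- The Stirling numbers of the second kind, `S(n, k)`: the number of partitions of an
`n`-element set into `k` nonempty blocks. -/
def stirling2 : ℕ → ℕ → ℕ
  | 0, 0 => 1
  | 0, _ + 1 => 0
  | _ + 1, 0 => 0
  | n + 1, k + 1 => (k + 1) * stirling2 n (k + 1) + stirling2 n k

/-!
A special barred preferential arrangement `f` is determined by its image, a finite set of
(section, rank) pairs, together with a surjection of `[ℓ]` onto that image. The arrangement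
conditions say exactly that the image is a staircase `stair ℓ h`: section `i` uses the ranks
below some height `1 ≤ h i ≤ ℓ`. A staircase of size `k` is thus a composition of `k` into
`m + 1` positive parts, of which there are `C(k - 1, m)` by stars and bars, and there are
`S(ℓ, k) k!` surjections of `[ℓ]` onto a `k`-element set.
-/

open Finset Fintype Nat

theorem stirling2_eq_stirlingSecond : stirling2 = stirlingSecond := by
  ext n k
  induction n generalizing k with
  | zero => cases k <;> rfl
  | succ n ih => cases k <;> simp [stirling2, stirlingSecond_succ_succ, ih]

theorem stirlingSecond_succ_mul_factorial (n k : ℕ) :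
    stirlingSecond (n + 1) k * k ! =
      k * (stirlingSecond n k * k ! + stirlingSecond n (k - 1) * (k - 1)!) := by
  cases k with
  | zero => simp
  | succ k => rw [stirlingSecond_succ_succ, factorial_succ]; simp only [add_tsub_cancel_right]; ring

theorem Finset.insert_eq_iff {α : Type*} [DecidableEq α] {s t : Finset α} {a : α} :
    insert a s = t ↔ a ∈ t ∧ (s = t ∨ s = t.erase a) := by
  constructor
  · rintro rfl
    refine ⟨mem_insert_self a s, ?_⟩
    by_cases ha : a ∈ s
    · exact .inl (insert_eq_of_mem ha).symm
    · exact .inr (erase_insert ha).symm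
  · rintro ⟨ha, rfl | rfl⟩
    · exact insert_eq_of_mem ha
    · exact insert_erase ha

theorem Fin.image_univ_cons {β : Type*} [DecidableEq β] {n : ℕ} (b : β) (g : Fin n → β) :
    univ.image (Fin.cons b g : Fin (n + 1) → β) = insert b (univ.image g) := by
  apply coe_injective
  push_cast
  simp [Fin.range_cons]

theorem Fin.card_filter_fun_succ {β : Type*} [Fintype β] {n : ℕ}
    (P : (Fin (n + 1) → β) → Prop) [DecidablePred P] :
    #{g | P g} = ∑ b, #{g : Fin n → β | P (Fin.cons b g)} := by
  simp only [card_filter]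
  rw [← (Fin.consEquiv fun _ => β).sum_comp, Fintype.sum_prod_type]
  rfl

theorem card_filter_image_univ_eq {β : Type*} [Fintype β] [DecidableEq β] (n : ℕ)
    (U : Finset β) : #{g : Fin n → β | univ.image g = U} = stirlingSecond n #U * (#U)! := by
  induction n generalizing U with
  | zero =>
    obtain rfl | hU := U.eq_empty_or_nonempty
    · simp
    · simp [univ_eq_empty, hU.ne_empty.symm, stirlingSecond_eq_zero_of_lt hU.card_pos]
  | succ n ih =>
    have hsplit (b : β) (hb : b ∈ U) :
        #{g : Fin n → β | univ.image g = U ∨ univ.image g = U.erase b} =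
          stirlingSecond n #U * (#U)! + stirlingSecond n (#U - 1) * (#U - 1)! := by
      rw [filter_or, card_union_of_disjoint (disjoint_filter.2 fun g _ h h' => ?_), ih, ih,
        card_erase_of_mem hb]
      exact notMem_erase b U (h.symm.trans h' ▸ hb)
    calc #{g : Fin (n + 1) → β | univ.image g = U}
        = ∑ b ∈ U, #{g : Fin n → β | univ.image g = U ∨ univ.image g = U.erase b} := by
          -- the value `b = g 0` is either also taken by the tail of `g`, or missing from its image
          simp only [Fin.card_filter_fun_succ, Fin.image_univ_cons, Finset.insert_eq_iff]
          rw [← sum_subset (subset_univ U) fun b _ hb => by simp [hb]]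
          exact sum_congr rfl fun b hb => by simp [hb]
      _ = #U * (stirlingSecond n #U * (#U)! + stirlingSecond n (#U - 1) * (#U - 1)!) :=
          sum_const_nat hsplit
      _ = stirlingSecond (n + 1) #U * (#U)! := (stirlingSecond_succ_mul_factorial n _).symm

theorem Fin.exists_mem_iff_val_lt_of_isLowerSet {ℓ : ℕ} {s : Set (Fin ℓ)}
    (hs : IsLowerSet s) : ∃ c ≤ ℓ, ∀ r : Fin ℓ, r ∈ s ↔ (r : ℕ) < c := by
  rcases hs.eq_univ_or_Iio with rfl | ⟨a, rfl⟩
  · exact ⟨ℓ, le_rfl, fun r => by simp [r.isLt]⟩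
  · exact ⟨a, a.isLt.le, fun r => Fin.lt_def⟩

section Stair

variable {ι : Type*} [Fintype ι] (ℓ : ℕ)

def stair (h : ι → ℕ) : Finset (ι × Fin ℓ) := {p | p.2 < h p.1}

theorem card_filter_mem_stair [DecidableEq ι] (h : ι → ℕ) (i : ι) :
    #{r : Fin ℓ | (i, r) ∈ stair ℓ h} = min ℓ (h i) := by
  simp [stair, Fin.card_filter_val_lt]

theorem card_stair [DecidableEq ι] {h : ι → ℕ} (hh : ∀ i, h i ≤ ℓ) :
    #(stair ℓ h) = ∑ i, h i := by
  rw [← filter_univ_mem (stair ℓ h), card_filter, Fintype.sum_prod_type]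
  simp only [← card_filter, card_filter_mem_stair, min_eq_right (hh _)]

theorem stair_injOn : Set.InjOn (stair (ι := ι) ℓ) {h | ∀ i, h i ≤ ℓ} := by
  classical
  intro h hh h' hh' heq
  funext i
  have := card_filter_mem_stair ℓ h i
  rw [heq, card_filter_mem_stair, min_eq_right (hh i), min_eq_right (hh' i)] at this
  exact this.symm

end Stair

theorem isSBPA_iff_image_eq_stair (m ℓ : ℕ) (f : Fin ℓ → Fin (m + 1) × Fin ℓ) :
    IsSBPA m ℓ f ↔ ∃ h ∈ piFinset fun _ => Icc 1 ℓ, stair ℓ h = univ.image f := by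
  constructor
  · rintro ⟨hbpa, hsec⟩
    have hlower : ∀ j, IsLowerSet {r : Fin ℓ | (j, r) ∈ univ.image f} := by
      rintro j r r' hrr' (hr : (j, r) ∈ univ.image f)
      obtain ⟨x, -, hx⟩ := mem_image.1 hr
      rcases hrr'.lt_or_eq with hlt | rfl
      · obtain ⟨y, hy1, hy2⟩ := hbpa x r' (by simpa [hx] using hlt)
        exact mem_image.2 ⟨y, mem_univ y, Prod.ext (by simp [hy1, hx]) hy2⟩
      · exact hr
    choose c hcℓ hc using fun j => Fin.exists_mem_iff_val_lt_of_isLowerSet (hlower j)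
    refine ⟨c, mem_piFinset.2 fun j => mem_Icc.2 ⟨?_, hcℓ j⟩, ?_⟩
    · obtain ⟨x, hx⟩ := hsec j
      have := (hc j (f x).2).1 (mem_image.2 ⟨x, mem_univ x, by rw [← hx]⟩)
      omega
    · ext ⟨j, r⟩
      simp only [stair, mem_filter, mem_univ, true_and]
      exact (hc j r).symm
  · rintro ⟨h, hH, hstair⟩
    have hmem : ∀ p, p ∈ univ.image f ↔ (p.2 : ℕ) < h p.1 := by
      intro p; rw [← hstair]; simp [stair]
    refine ⟨fun x r hr => ?_, fun j => ?_⟩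
    · have hx := (hmem (f x)).1 (mem_image_of_mem f (mem_univ x))
      obtain ⟨y, -, hy⟩ := mem_image.1 ((hmem ((f x).1, r)).2 (lt_trans hr hx))
      exact ⟨y, by rw [hy], by rw [hy]⟩
    · have hj := mem_Icc.1 (mem_piFinset.1 hH j)
      obtain ⟨x, -, hx⟩ := mem_image.1 ((hmem (j, ⟨0, by omega⟩)).2 hj.1)
      exact ⟨x, by rw [hx]⟩

theorem Finset.Nat.card_antidiagonalTuple (k n : ℕ) :
    #(antidiagonalTuple k n) = (k + n - 1).choose n := by
  rw [card_eq_of_equiv_fintype ((Equiv.subtypeEquivRight fun _ => mem_antidiagonalTuple).trans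
    (Sym.equivNatSumOfFintype (Fin k) n).symm), Sym.card_sym_eq_choose, Fintype.card_fin]

theorem sum_sub_one_add_card {ι : Type*} [Fintype ι] {h : ι → ℕ} (hh : ∀ i, 1 ≤ h i) :
    ∑ i, (h i - 1) + card ι = ∑ i, h i := by
  rw [Fintype.card_eq_sum_ones, ← sum_add_distrib]
  exact sum_congr rfl fun i _ => Nat.sub_add_cancel (hh i)

theorem card_filter_piFinset_Icc_sum_eq_add (m n ℓ : ℕ) (hnℓ : n + (m + 1) ≤ ℓ) :
    #{h ∈ piFinset fun _ : Fin (m + 1) => Icc 1 ℓ | ∑ i, h i = n + (m + 1)} =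
      #(antidiagonalTuple (m + 1) n) := by
  have hpos : ∀ h ∈ piFinset fun _ : Fin (m + 1) => Icc 1 ℓ, ∀ i, 1 ≤ h i :=
    fun h hh i => (mem_Icc.1 (mem_piFinset.1 hh i)).1
  refine card_nbij' (fun h i => h i - 1) (fun P i => P i + 1) ?_ ?_ ?_ ?_
  · intro h hh
    simp only [mem_coe, mem_filter] at hh
    have := sum_sub_one_add_card (hpos h hh.1)
    simp only [mem_coe, mem_antidiagonalTuple, Fintype.card_fin] at this ⊢
    omega
  · intro P hP
    simp only [mem_coe, mem_antidiagonalTuple] at hP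
    have hle : ∀ i, P i ≤ n := fun i => hP ▸ single_le_sum (fun _ _ => zero_le _) (mem_univ i)
    simp only [mem_coe, mem_filter, mem_piFinset, mem_Icc, sum_add_distrib, hP]
    refine ⟨fun i => ⟨by omega, by have := hle i; omega⟩, by simp⟩
  · intro h hh
    simp only [mem_coe, mem_filter] at hh
    funext i
    exact Nat.sub_add_cancel (hpos h hh.1 i)
  · intro P _
    simp

theorem card_filter_piFinset_Icc_sum_eq (m ℓ k : ℕ) (hk : 1 ≤ k) (hkℓ : k ≤ ℓ) :
    #{h ∈ piFinset fun _ : Fin (m + 1) => Icc 1 ℓ | ∑ i, h i = k} = (k - 1).choose m := by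
  rcases lt_or_ge k (m + 1) with hkm | hkm
  · rw [choose_eq_zero_of_lt (by omega), Finset.card_eq_zero, filter_eq_empty_iff]
    intro h hh hsum
    have := sum_sub_one_add_card fun i => (mem_Icc.1 (mem_piFinset.1 hh i)).1
    rw [Fintype.card_fin] at this
    omega
  obtain ⟨n, rfl⟩ : ∃ n, k = n + (m + 1) := ⟨k - (m + 1), by omega⟩
  rw [card_filter_piFinset_Icc_sum_eq_add m n ℓ hkℓ, Nat.card_antidiagonalTuple,
    show m + 1 + n - 1 = m + n by omega, show n + (m + 1) - 1 = m + n by omega, choose_symm_add]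

theorem sbpa_eq_sum_heights (m ℓ : ℕ) :
    sbpa m ℓ = ∑ h ∈ piFinset fun _ : Fin (m + 1) => Icc 1 ℓ,
      stirlingSecond ℓ (∑ i, h i) * (∑ i, h i)! := by
  have hle : ∀ h ∈ piFinset fun _ : Fin (m + 1) => Icc 1 ℓ, ∀ i, h i ≤ ℓ :=
    fun h hh i => (mem_Icc.1 (mem_piFinset.1 hh i)).2
  calc sbpa m ℓ = #{f : Fin ℓ → Fin (m + 1) × Fin ℓ |
        univ.image f ∈ (piFinset fun _ : Fin (m + 1) => Icc 1 ℓ).image (stair ℓ)} := by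
        simp only [sbpa, Fintype.card_subtype, isSBPA_iff_image_eq_stair, mem_image]
    _ = _ := by
        rw [← sum_card_fiberwise_eq_card_filter, sum_image ((stair_injOn ℓ).mono hle)]
        exact sum_congr rfl fun h hh => by
          rw [card_filter_image_univ_eq, card_stair ℓ (hle h hh)]

theorem sbpa_eq_sum_stirling2_general (m ℓ : ℕ) :
    sbpa m ℓ =
      ∑ k ∈ Finset.Icc 1 ℓ, stirling2 ℓ k * Nat.factorial k * Nat.choose (k - 1) m := by
  set H := piFinset fun _ : Fin (m + 1) => Icc 1 ℓ
  have hH : ∀ h ∈ H, ∀ i, h i ∈ Icc 1 ℓ := fun h hh => mem_piFinset.1 hh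
  calc sbpa m ℓ = ∑ h ∈ H, stirlingSecond ℓ (∑ i, h i) * (∑ i, h i)! :=
        sbpa_eq_sum_heights m ℓ
    _ = ∑ h ∈ H with ∑ i, h i ∈ Icc 1 ℓ,
          stirlingSecond ℓ (∑ i, h i) * (∑ i, h i)! := by
        refine (sum_filter_of_ne fun h hh hne =>
          mem_Icc.2 ⟨?_, not_lt.1 fun hlt => hne ?_⟩).symm
        · exact (mem_Icc.1 (hH h hh 0)).1.trans (single_le_sum (by simp) (mem_univ 0))
        · rw [stirlingSecond_eq_zero_of_lt hlt, zero_mul]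
    _ = ∑ k ∈ Icc 1 ℓ, #{h ∈ H | ∑ i, h i = k} * (stirlingSecond ℓ k * k !) := by
        rw [← sum_fiberwise_eq_sum_filter]
        exact sum_congr rfl fun k _ => sum_const_nat fun h hh => by rw [(mem_filter.1 hh).2]
    _ = _ := by
        rw [stirling2_eq_stirlingSecond]
        refine sum_congr rfl fun k hk => ?_
        rw [card_filter_piFinset_Icc_sum_eq m ℓ k (mem_Icc.1 hk).1 (mem_Icc.1 hk).2]
        ring

/-- For every `m ≥ 0` and `ℓ ≥ 1`,
`s_{m,ℓ} = ∑_{k=1}^{ℓ} S(ℓ,k) · k! · C(k-1, m)`. -/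
theorem sbpa_eq_sum_stirling2 (m ℓ : ℕ) (hℓ : 1 ≤ ℓ) :
    sbpa m ℓ =
      ∑ k ∈ Finset.Icc 1 ℓ, stirling2 ℓ k * Nat.factorial k * Nat.choose (k - 1) m :=
  sbpa_eq_sum_stirling2_general m ℓ
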